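/- Let X be a real vector space and let ‖·‖₁ and ‖·‖₂ be two equivalent norms on X, each of which makes X a locally uniformly convex Banach space. Then the norm ‖x‖ := max{‖x‖₁, ‖x‖₂} makes X a locally uniformly convex Banach space. -/

import Mathlib

open Filter Topology Set

section Defs

variable {X : Type*} [AddCommGroup X] [Module ℝ X]

/-- `N` is a norm on the real vector space `X`. -/
def IsNorm (N : X → ℝ) : Prop :=
  (∀ x : X, N x = 0 ↔ x = 0) ∧
  (∀ (a : ℝ) (x : X), N (a • x) = |a| * N x) ∧
  (∀ x y : X, N (x + y) ≤ N x + N y)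

/-- `N` is locally uniformly convex. -/
def IsLUR (N : X → ℝ) : Prop :=
  ∀ x : X, N x = 1 → ∀ y : ℕ → X, (∀ n, N (y n) = 1) →
    Filter.Tendsto (fun n => N ((2 : ℝ)⁻¹ • (x + y n))) Filter.atTop (nhds 1) →
    Filter.Tendsto (fun n => N (x - y n)) Filter.atTop (nhds 0)

/-- `R` is a nearest point map onto `K` with respect to the norm `N`. -/
def IsNearestPointMap (N : X → ℝ) (K : Set X) (R : X → X) : Prop :=
  ∀ x : X, R x ∈ K ∧ N (x - R x) = sInf ((fun c => N (x - c)) '' K)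

/-- `R` is continuous with respect to the norm `N`. -/
def NContinuous (N : X → ℝ) (R : X → X) : Prop :=
  ∀ x : X, ∀ ε > (0 : ℝ), ∃ δ > (0 : ℝ), ∀ y : X, N (x - y) < δ → N (R x - R y) < ε

/-- `R` is uniformly continuous with respect to the norm `N`. -/
def NUniformContinuous (N : X → ℝ) (R : X → X) : Prop :=
  ∀ ε > (0 : ℝ), ∃ δ > (0 : ℝ), ∀ x y : X, N (x - y) < δ → N (R x - R y) < ε

end Defs

section Defs2

variable {X : Type*} [AddCommGroup X] [Module ℝ X]

/-- `X` is complete with respect to the norm `N`: every `N`-Cauchy sequence `N`-converges. -/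
def NComplete (N : X → ℝ) : Prop :=
  ∀ u : ℕ → X,
    (∀ ε > (0 : ℝ), ∃ M : ℕ, ∀ m ≥ M, ∀ n ≥ M, N (u m - u n) < ε) →
    ∃ x : X, Filter.Tendsto (fun n => N (u n - x)) Filter.atTop (nhds 0)

end Defs2

/-!
Let `N = max N₁ N₂`. Along any subsequence we may pass to a further one on which `N` is attained
at the midpoints by one fixed `Nᵢ`. Since `Nᵢ ≤ N ≤ c Nᵢ`, the points `x`, `yₙ` lie in the
`Nᵢ`-unit ball while their `Nᵢ`-midpoints tend to norm `1`; this forces `Nᵢ x = 1` and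
`Nᵢ yₙ → 1`, so LUR of `Nᵢ` (applied to the normalised `yₙ`) gives `Nᵢ (x - yₙ) → 0`, hence
`N (x - yₙ) → 0`.
-/

lemma tendsto_one_of_two_mul_le_add {ι : Type*} {l : Filter ι} {s t w : ι → ℝ}
    (hs : ∀ i, s i ≤ 1) (ht : ∀ i, t i ≤ 1) (hw : ∀ i, 2 * w i ≤ s i + t i)
    (hw₁ : Tendsto w l (𝓝 1)) : Tendsto s l (𝓝 1) := by
  have hlow : Tendsto (fun i => 2 * w i - 1) l (𝓝 1) := by
    convert (hw₁.const_mul 2).sub_const 1 using 2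
    norm_num
  refine tendsto_of_tendsto_of_tendsto_of_le_of_le hlow tendsto_const_nhds (fun i => ?_) hs
  linarith [hw i, ht i]

namespace IsNorm

variable {X : Type*} [AddCommGroup X] [Module ℝ X] {N : X → ℝ}

lemma map_zero (hN : IsNorm N) : N 0 = 0 := (hN.1 0).2 rfl

lemma map_smul (hN : IsNorm N) (c : ℝ) (x : X) : N (c • x) = |c| * N x := hN.2.1 c x

lemma add_le (hN : IsNorm N) (x y : X) : N (x + y) ≤ N x + N y := hN.2.2 x y

lemma map_neg (hN : IsNorm N) (x : X) : N (-x) = N x := by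
  simpa using hN.map_smul (-1) x

lemma nonneg (hN : IsNorm N) (x : X) : 0 ≤ N x := by
  have h := hN.add_le x (-x)
  rw [add_neg_cancel, hN.map_zero, hN.map_neg] at h
  linarith

lemma sub_le_sub_add_sub (hN : IsNorm N) (x y z : X) : N (x - z) ≤ N (x - y) + N (y - z) := by
  simpa using hN.add_le (x - y) (y - z)

lemma abs_sub_le (hN : IsNorm N) (x y : X) : |N x - N y| ≤ N (x - y) := by
  have h₁ := hN.sub_le_sub_add_sub x y 0
  have h₂ := hN.sub_le_sub_add_sub y x 0
  rw [← neg_sub x y, hN.map_neg] at h₂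
  simp only [sub_zero] at h₁ h₂
  exact abs_sub_le_iff.2 ⟨by linarith, by linarith⟩

lemma two_mul_midpoint_le (hN : IsNorm N) (x y : X) :
    2 * N ((2 : ℝ)⁻¹ • (x + y)) ≤ N x + N y := by
  rw [hN.map_smul, abs_of_pos (by norm_num)]
  linarith [hN.add_le x y]

lemma max {N₁ N₂ : X → ℝ} (h₁ : IsNorm N₁) (h₂ : IsNorm N₂) :
    IsNorm fun x => max (N₁ x) (N₂ x) := by
  refine ⟨fun x => ⟨fun hx => ?_, fun hx => ?_⟩, fun c x => ?_, fun x y => ?_⟩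
  · exact (h₁.1 x).1 (le_antisymm (hx ▸ le_max_left _ _) (h₁.nonneg x))
  · simp [hx, h₁.map_zero, h₂.map_zero]
  · simp only [h₁.map_smul, h₂.map_smul, mul_max_of_nonneg _ _ (abs_nonneg c)]
  · exact max_le ((h₁.add_le x y).trans (add_le_add (le_max_left _ _) (le_max_left _ _)))
      ((h₂.add_le x y).trans (add_le_add (le_max_right _ _) (le_max_right _ _)))

end IsNorm

section

variable {X : Type*} [AddCommGroup X] [Module ℝ X]

lemma NComplete.of_le_of_le_mul {N M : X → ℝ} (hc : NComplete N) (hN : IsNorm N) {c : ℝ}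
    (hle : ∀ z, N z ≤ M z) (hge : ∀ z, M z ≤ c * N z) : NComplete M := by
  intro u hu
  obtain ⟨x, hx⟩ := hc u fun ε hε => by
    obtain ⟨K, hK⟩ := hu ε hε
    exact ⟨K, fun m hm n hn => (hle _).trans_lt (hK m hm n hn)⟩
  refine ⟨x, squeeze_zero (fun n => (hN.nonneg _).trans (hle _)) (fun n => hge _) ?_⟩
  simpa using hx.const_mul c

variable {N : X → ℝ}

lemma IsLUR.tendsto_sub_of_tendsto (hN : IsNorm N) (hL : IsLUR N) {x : X} {y : ℕ → X}
    (hx : N x = 1) (hy : Tendsto (fun n => N (y n)) atTop (𝓝 1))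
    (hmid : Tendsto (fun n => N ((2 : ℝ)⁻¹ • (x + y n))) atTop (𝓝 1)) :
    Tendsto (fun n => N (x - y n)) atTop (𝓝 0) := by
  set z : ℕ → X := fun n => if N (y n) = 0 then x else (N (y n))⁻¹ • y n
  have hz : ∀ n, N (z n) = 1 := fun n => by
    by_cases h : N (y n) = 0
    · simp [z, h, hx]
    · simp [z, h, hN.map_smul, abs_of_nonneg (hN.nonneg _)]
  have hzy : Tendsto (fun n => N (z n - y n)) atTop (𝓝 0) := by
    have habs : Tendsto (fun n => |1 - N (y n)|) atTop (𝓝 0) := by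
      simpa using (tendsto_const_nhds (x := (1 : ℝ))).sub hy |>.abs
    refine habs.congr' ?_
    filter_upwards [hy.eventually_ne one_ne_zero] with n hn
    have hpos : 0 < N (y n) := lt_of_le_of_ne (hN.nonneg _) (Ne.symm hn)
    rw [show z n - y n = ((N (y n))⁻¹ - 1) • y n by simp [z, hn, sub_smul], hN.map_smul,
      ← abs_of_pos hpos, ← abs_mul, abs_of_pos hpos, sub_mul, inv_mul_cancel₀ hn, one_mul]
  have hmidz : Tendsto (fun n => N ((2 : ℝ)⁻¹ • (x + z n))) atTop (𝓝 1) := by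
    refine hmid.congr_dist (squeeze_zero (fun _ => dist_nonneg) (fun n => ?_)
      (by simpa using hzy.const_mul 2⁻¹))
    calc dist (N ((2 : ℝ)⁻¹ • (x + y n))) (N ((2 : ℝ)⁻¹ • (x + z n)))
        ≤ N ((2 : ℝ)⁻¹ • (x + z n) - (2 : ℝ)⁻¹ • (x + y n)) := by
          rw [Real.dist_eq, abs_sub_comm]; exact hN.abs_sub_le _ _
      _ = 2⁻¹ * N (z n - y n) := by
          rw [← smul_sub, add_sub_add_left_eq_sub, hN.map_smul, abs_of_pos (by norm_num)]
  have hxz := hL x hx z hz hmidz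
  refine squeeze_zero (fun n => hN.nonneg _) (fun n => hN.sub_le_sub_add_sub x (z n) (y n)) ?_
  simpa using hxz.add hzy

lemma IsLUR.tendsto_sub_of_le_of_le_mul {M : X → ℝ} (hM : IsNorm M) (hL : IsLUR M) {c : ℝ}
    (hle : ∀ z, M z ≤ N z) (hge : ∀ z, N z ≤ c * M z) {x : X} {y : ℕ → X}
    (hx : N x = 1) (hy : ∀ n, N (y n) = 1)
    (hmid : Tendsto (fun n => M ((2 : ℝ)⁻¹ • (x + y n))) atTop (𝓝 1)) :
    Tendsto (fun n => N (x - y n)) atTop (𝓝 0) := by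
  have hMx : M x ≤ 1 := hx ▸ hle x
  have hMy : ∀ n, M (y n) ≤ 1 := fun n => hy n ▸ hle (y n)
  have hMx₁ : M x = 1 := tendsto_nhds_unique tendsto_const_nhds <|
    tendsto_one_of_two_mul_le_add (fun _ => hMx) hMy (fun n => hM.two_mul_midpoint_le x (y n)) hmid
  have hMy₁ : Tendsto (fun n => M (y n)) atTop (𝓝 1) :=
    tendsto_one_of_two_mul_le_add hMy (fun _ => hMx)
      (fun n => (hM.two_mul_midpoint_le x (y n)).trans_eq (add_comm _ _)) hmid
  refine squeeze_zero (fun n => (hM.nonneg _).trans (hle _)) (fun n => hge _) ?_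
  simpa using (hL.tendsto_sub_of_tendsto hM hMx₁ hMy₁ hmid).const_mul c

lemma IsLUR.exists_subseq_tendsto_sub {M : X → ℝ} (hM : IsNorm M) (hL : IsLUR M) {c : ℝ}
    (hle : ∀ z, M z ≤ N z) (hge : ∀ z, N z ≤ c * M z) {x : X} {y : ℕ → X}
    (hx : N x = 1) (hy : ∀ n, N (y n) = 1)
    (hmid : Tendsto (fun n => N ((2 : ℝ)⁻¹ • (x + y n))) atTop (𝓝 1))
    {ns : ℕ → ℕ} (hns : Tendsto ns atTop atTop)
    (hfreq : ∃ᶠ k in atTop, N ((2 : ℝ)⁻¹ • (x + y (ns k))) = M ((2 : ℝ)⁻¹ • (x + y (ns k)))) :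
    ∃ φ : ℕ → ℕ, Tendsto (fun k => N (x - y (ns (φ k)))) atTop (𝓝 0) := by
  obtain ⟨φ, hφ, hφM⟩ := extraction_of_frequently_atTop hfreq
  have hmidM : Tendsto (fun k => M ((2 : ℝ)⁻¹ • (x + y (ns (φ k))))) atTop (𝓝 1) :=
    (hmid.comp (hns.comp hφ.tendsto_atTop)).congr hφM
  exact ⟨φ, hL.tendsto_sub_of_le_of_le_mul hM hle hge hx (fun k => hy _) hmidM⟩

lemma IsLUR.max {N₁ N₂ : X → ℝ} (h₁ : IsNorm N₁) (h₂ : IsNorm N₂) (hl₁ : IsLUR N₁)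
    (hl₂ : IsLUR N₂) {c₁ c₂ : ℝ} (hc₁ : ∀ z, max (N₁ z) (N₂ z) ≤ c₁ * N₁ z)
    (hc₂ : ∀ z, max (N₁ z) (N₂ z) ≤ c₂ * N₂ z) :
    IsLUR fun x => max (N₁ x) (N₂ x) := by
  intro x hx y hy hmid
  refine tendsto_of_subseq_tendsto fun ns hns => ?_
  have hchoice := Frequently.of_forall (f := atTop) fun k =>
    max_choice (N₁ ((2 : ℝ)⁻¹ • (x + y (ns k)))) (N₂ ((2 : ℝ)⁻¹ • (x + y (ns k))))
  rcases frequently_or_distrib.1 hchoice with h | h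
  · exact hl₁.exists_subseq_tendsto_sub h₁ (fun _ => le_max_left _ _) hc₁ hx hy hmid hns h
  · exact hl₂.exists_subseq_tendsto_sub h₂ (fun _ => le_max_right _ _) hc₂ hx hy hmid hns h

end

theorem statement15_general {X : Type*} [AddCommGroup X] [Module ℝ X] (N₁ N₂ : X → ℝ)
    (h₁ : IsNorm N₁) (h₂ : IsNorm N₂)
    (a b : ℝ) (ha : 0 < a)
    (heq : ∀ x : X, a * N₁ x ≤ N₂ x ∧ N₂ x ≤ b * N₁ x)
    (hc₁ : NComplete N₁)
    (hl₁ : IsLUR N₁) (hl₂ : IsLUR N₂) :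
    IsNorm (fun x : X => max (N₁ x) (N₂ x)) ∧
    NComplete (fun x : X => max (N₁ x) (N₂ x)) ∧
    IsLUR (fun x : X => max (N₁ x) (N₂ x)) := by
  have hsum : ∀ z, max (N₁ z) (N₂ z) ≤ N₁ z + N₂ z :=
    fun z => max_le_add_of_nonneg (h₁.nonneg z) (h₂.nonneg z)
  have hmax₁ : ∀ z, max (N₁ z) (N₂ z) ≤ (1 + b) * N₁ z := fun z => by
    linarith [hsum z, (heq z).2]
  have hmax₂ : ∀ z, max (N₁ z) (N₂ z) ≤ (a⁻¹ + 1) * N₂ z := fun z => by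
    have h : N₁ z ≤ a⁻¹ * N₂ z := (le_inv_mul_iff₀ ha).2 (heq z).1
    linarith [hsum z]
  exact ⟨h₁.max h₂, hc₁.of_le_of_le_mul h₁ (fun _ => le_max_left _ _) hmax₁,
    hl₁.max h₁ h₂ hl₂ hmax₁ hmax₂⟩

theorem statement15 {X : Type*} [AddCommGroup X] [Module ℝ X] (N₁ N₂ : X → ℝ)
    (h₁ : IsNorm N₁) (h₂ : IsNorm N₂)
    (a b : ℝ) (ha : 0 < a) (hb : 0 < b)
    (heq : ∀ x : X, a * N₁ x ≤ N₂ x ∧ N₂ x ≤ b * N₁ x)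
    (hc₁ : NComplete N₁) (hc₂ : NComplete N₂)
    (hl₁ : IsLUR N₁) (hl₂ : IsLUR N₂) :
    IsNorm (fun x : X => max (N₁ x) (N₂ x)) ∧
    NComplete (fun x : X => max (N₁ x) (N₂ x)) ∧
    IsLUR (fun x : X => max (N₁ x) (N₂ x)) :=
  statement15_general N₁ N₂ h₁ h₂ a b ha heq hc₁ hl₁ hl₂
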